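/- Let α, β, γ be real numbers with 0 ≤ γ < β < α, and let L_{α,β,γ}(x) = (cosh(αx) − cosh(γx))/(cosh(βx) − cosh(γx)) for x > 0. Then L_{α,β,γ} is strictly increasing on (0,+∞). -/

import Mathlib

/-!
The identity `cosh u - cosh v = 2 sinh((u+v)/2) sinh((u-v)/2)` factors `L_{α,β,γ}(x)` into
`sinh(p₁x)/sinh(q₁x) · sinh(p₂x)/sinh(q₂x)` with `pᵢ = (α ± γ)/2`, `qᵢ = (β ± γ)/2`, and
`0 ≤ γ < β < α` gives `0 < qᵢ < pᵢ`. For `0 < q < p` the ratio `sinh(px)/sinh(qx)` is positive and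
strictly increasing: its derivative has the sign of `b sinh a cosh b - a sinh b cosh a` with
`a = qx < b = px`, which by the addition formulas is half of `(b-a) sinh(a+b) - (a+b) sinh(b-a)`,
positive because `sinh s / s` is increasing.
-/

/-- The function `L_{α,β,γ}` defined on `(0,+∞)`. -/
noncomputable def L (α β γ : ℝ) (x : ℝ) : ℝ :=
  (Real.cosh (α * x) - Real.cosh (γ * x)) / (Real.cosh (β * x) - Real.cosh (γ * x))

open Set

lemma StrictMonoOn.mul_monotoneOn {α M₀ : Type*} [Mul M₀] [Zero M₀] [Preorder M₀] [Preorder α]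
    [PosMulMono M₀] [MulPosStrictMono M₀] {f g : α → M₀} {s : Set α}
    (hf : StrictMonoOn f s) (hg : MonotoneOn g s) (hf₀ : ∀ x ∈ s, 0 ≤ f x)
    (hg₀ : ∀ x ∈ s, 0 < g x) : StrictMonoOn (f * g) s :=
  fun _ ha _ hb h ↦ mul_lt_mul (hf ha hb h) (hg ha hb h.le) (hg₀ _ ha) (hf₀ _ hb)

namespace Real

lemma cosh_sub_cosh (u v : ℝ) :
    cosh u - cosh v = 2 * sinh ((u + v) / 2) * sinh ((u - v) / 2) := by
  obtain ⟨a, b, rfl, rfl⟩ : ∃ a b, u = a + b ∧ v = a - b :=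
    ⟨(u + v) / 2, (u - v) / 2, by ring, by ring⟩
  rw [cosh_add, cosh_sub, show (a + b + (a - b)) / 2 = a by ring,
    show (a + b - (a - b)) / 2 = b by ring]
  ring

lemma sinh_lt_mul_cosh {t : ℝ} (ht : 0 < t) : sinh t < t * cosh t := by
  have hmono : StrictMonoOn (fun s ↦ s * cosh s - sinh s) (Ici 0) := by
    refine strictMonoOn_of_hasDerivWithinAt_pos (convex_Ici 0) (by fun_prop)
      (fun s _ ↦ (((hasDerivAt_id s).mul (hasDerivAt_cosh s)).sub
        (hasDerivAt_sinh s)).hasDerivWithinAt) fun s hs ↦ ?_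
    rw [interior_Ici, mem_Ioi] at hs
    simp only [id, one_mul, add_sub_cancel_left]
    positivity
  simpa using hmono self_mem_Ici ht.le ht

lemma sinh_div_self_strictMonoOn : StrictMonoOn (fun s ↦ sinh s / s) (Ioi 0) := by
  refine strictMonoOn_of_hasDerivWithinAt_pos (convex_Ioi 0)
    (continuous_sinh.continuousOn.div continuousOn_id fun s hs ↦ ne_of_gt hs)
    (fun s hs ↦ ((hasDerivAt_sinh s).div (hasDerivAt_id s)
      (ne_of_gt (interior_subset hs : 0 < s))).hasDerivWithinAt) fun s hs ↦ ?_
  rw [interior_Ioi, mem_Ioi] at hs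
  have := sinh_lt_mul_cosh hs
  simp only [id, mul_one]
  exact div_pos (by linarith) (by positivity)

lemma mul_sinh_mul_cosh_lt {a b : ℝ} (ha : 0 < a) (hab : a < b) :
    a * sinh b * cosh a < b * sinh a * cosh b := by
  have hsum : sinh (b - a) / (b - a) < sinh (a + b) / (a + b) :=
    sinh_div_self_strictMonoOn (mem_Ioi.2 (by linarith)) (mem_Ioi.2 (by linarith)) (by linarith)
  rw [div_lt_div_iff₀ (by linarith) (by linarith), sinh_add, sinh_sub] at hsum
  linarith

lemma sinh_mul_div_sinh_mul_pos {p q x : ℝ} (hp : 0 < p) (hq : 0 < q) (hx : 0 < x) :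
    0 < sinh (p * x) / sinh (q * x) :=
  div_pos (sinh_pos_iff.2 (mul_pos hp hx)) (sinh_pos_iff.2 (mul_pos hq hx))

lemma sinh_mul_div_sinh_mul_strictMonoOn {p q : ℝ} (hq : 0 < q) (hqp : q < p) :
    StrictMonoOn (fun x ↦ sinh (p * x) / sinh (q * x)) (Ioi 0) := by
  have hsinh_ne (x : ℝ) (hx : x ∈ Ioi 0) : sinh (q * x) ≠ 0 :=
    (sinh_pos_iff.2 (mul_pos hq hx)).ne'
  refine strictMonoOn_of_hasDerivWithinAt_pos (convex_Ioi 0) (by fun_prop (disch := assumption))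
    (fun x hx ↦ ((((hasDerivAt_id x).const_mul p).sinh).div ((hasDerivAt_id x).const_mul q).sinh
      (hsinh_ne x (interior_subset hx))).hasDerivWithinAt) fun x hx ↦ ?_
  rw [interior_Ioi, mem_Ioi] at hx
  have key := mul_sinh_mul_cosh_lt (mul_pos hq hx) (mul_lt_mul_of_pos_right hqp hx)
  refine div_pos ((mul_pos_iff_of_pos_left hx).1 ?_) (by positivity)
  simp only [id, mul_one]
  linarith

end Real

open Real in
lemma L_eq_sinh_div_mul_sinh_div (α β γ x : ℝ) :
    L α β γ x = sinh ((α + γ) / 2 * x) / sinh ((β + γ) / 2 * x) *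
      (sinh ((α - γ) / 2 * x) / sinh ((β - γ) / 2 * x)) := by
  simp only [L, cosh_sub_cosh, ← add_mul, ← sub_mul, mul_div_right_comm _ x, mul_assoc,
    mul_div_mul_left _ _ (two_ne_zero (α := ℝ)), div_mul_div_comm]

theorem L_strictMonoOn (α β γ : ℝ) (hγ : 0 ≤ γ) (hγβ : γ < β) (hβα : β < α) :
    StrictMonoOn (L α β γ) (Set.Ioi 0) := by
  rw [funext (L_eq_sinh_div_mul_sinh_div α β γ)]
  exact (Real.sinh_mul_div_sinh_mul_strictMonoOn (by linarith) (by linarith)).mul_monotoneOn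
    (Real.sinh_mul_div_sinh_mul_strictMonoOn (by linarith) (by linarith)).monotoneOn
    (fun x hx ↦ (Real.sinh_mul_div_sinh_mul_pos (by linarith) (by linarith) hx).le)
    (fun x hx ↦ Real.sinh_mul_div_sinh_mul_pos (by linarith) (by linarith) hx)
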